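/- arXiv:2209.12960 — 2 statements merged into one kernel-verified Lean document; each statement's English description precedes it below -/
import Mathlib

section
/- A commutative ring R is Noetherian if and only if the space Idl(R) of all ideals of R, endowed with the coarse lower topology, is a Noetherian topological space. -/
/-! The coarse lower topology is Mathlib's lower topology on the complete lattice of ideals, and
for any complete lattice the lower topology is Noetherian exactly when the lattice satisfies the
ascending chain condition. -/

/-- The coarse lower topology on the set of ideals of a commutative ring. -/
def coarseLowerTopology (R : Type*) [CommRing R] : TopologicalSpace (Ideal R) :=
  TopologicalSpace.generateFrom {U : Set (Ideal R) | ∃ a : Ideal R, U = {i : Ideal R | a ≤ i}ᶜ}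

open Set Topology TopologicalSpace

theorem ClosedIciTopology.wellFoundedGT_of_noetherianSpace {α : Type*} [PartialOrder α]
    [TopologicalSpace α] [ClosedIciTopology α] [NoetherianSpace α] : WellFoundedGT α :=
  StrictAnti.wellFoundedGT (f := fun a : α ↦ (⟨Ici a, isClosed_Ici a⟩ : Closeds α))
    fun _ _ hab ↦ Ici_ssubset_Ici.mpr hab

namespace Topology.IsLower

variable {α : Type*} [CompleteLattice α] [TopologicalSpace α] [IsLower α]

/-- An ultrafilter `f` on `s` converges to any `x ∈ s` above the largest `a` with `Ici a ∈ f`;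
that largest `a` exists by the ascending chain condition, as `{a | Ici a ∈ f}` is sup-closed. -/
theorem isCompact_of_wellFoundedGT [WellFoundedGT α] (s : Set α) : IsCompact s := by
  rw [isCompact_iff_ultrafilter_le_nhds]
  intro f hsf
  set T : Set α := {a | ∀ᶠ z in f, a ≤ z}
  have hT : sSup T ∈ T :=
    CompleteLattice.WellFoundedGT.isSupClosedCompact α ‹_› T ⟨⊥, by simp [T]⟩
      fun a ha b hb ↦ (ha.and hb).mono fun _ hz ↦ sup_le hz.1 hz.2
  obtain ⟨x, hxs, hTx⟩ :=
    Filter.nonempty_of_mem (Filter.inter_mem (Filter.le_principal_iff.mp hsf) hT)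
  refine ⟨x, hxs, Filter.tendsto_id'.mp (tendsto_nhds_iff_not_le.mpr fun y hyx ↦ ?_)⟩
  exact Ultrafilter.eventually_not.mpr fun hy ↦ hyx ((le_sSup (s := T) hy).trans hTx)

theorem noetherianSpace_iff_wellFoundedGT : NoetherianSpace α ↔ WellFoundedGT α :=
  ⟨fun _ ↦ ClosedIciTopology.wellFoundedGT_of_noetherianSpace,
    fun _ ↦ noetherianSpace_iff_isCompact.mpr isCompact_of_wellFoundedGT⟩

end Topology.IsLower

theorem coarseLowerTopology_eq_lower (R : Type*) [CommRing R] :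
    coarseLowerTopology R = Topology.lower (Ideal R) := by
  simp only [coarseLowerTopology, Topology.lower, eq_comm]
  rfl

/-- `R` is Noetherian iff `Idl(R)` with the coarse lower topology is a Noetherian space. -/
theorem isNoetherianRing_iff_noetherianSpace (R : Type*) [CommRing R] :
    letI := coarseLowerTopology R
    IsNoetherianRing R ↔ TopologicalSpace.NoetherianSpace (Ideal R) := by
  let := coarseLowerTopology R
  have : IsLower (Ideal R) := ⟨coarseLowerTopology_eq_lower R⟩
  rw [IsLower.noetherianSpace_iff_wellFoundedGT]
  exact isNoetherianRing_iff.trans isNoetherian_iff'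
end

section
/- Let R be a Noetherian commutative ring such that the space Prm(R) of primary ideals, with the coarse lower topology, is sober. Then the Krull dimension of R is at most 1. -/
/-! If `dim R ≥ 2`, take primes `P < Q < m` with `m` maximal, `x ∈ Q \ P` and `y ∈ m \ Q`.
The ideals `qₙ = P + x m + m ^ (n + 1)` are `m`-primary and decrease. In the lower topology a
decreasing family is irreducible and any generic point of its closure lies between `⋂ qₙ` and
every `qₙ`, so sobriety makes `J = ⋂ qₙ` primary. But `x y ∈ J`, while Krull's intersection
theorem, applied modulo `P + x m`, shows that neither `x` nor any power of `y` lies in `J`. -/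

open Set Topology

theorem isPreirreducible_of_directedOn_specializes {X : Type*} [TopologicalSpace X] {s : Set X}
    (hs : DirectedOn (fun x y => y ⤳ x) s) : IsPreirreducible s := by
  rintro U V hU hV ⟨x, hxs, hxU⟩ ⟨y, hys, hyV⟩
  obtain ⟨z, hzs, hzx, hzy⟩ := hs x hxs y hys
  exact ⟨z, hzs, hzx.mem_open hU hxU, hzy.mem_open hV hyV⟩

namespace Topology.IsLower

variable {α : Type*} [TopologicalSpace α]

theorem subtype_specializes_iff_le [Preorder α] [IsLower α] {S : Set α} {x y : S} :
    x ⤳ y ↔ (x : α) ≤ y := by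
  rw [subtype_specializes_iff, specializes_iff_mem_closure, closure_singleton, mem_Ici]

theorem iInf_mem_of_quasiSober [CompleteLattice α] [IsLower α] {S : Set α} [QuasiSober S]
    {ι : Type*} [Preorder ι] [IsDirected ι (· ≤ ·)] [Nonempty ι] {q : ι → α} (hq : Antitone q)
    (hqS : ∀ i, q i ∈ S) : ⨅ i, q i ∈ S := by
  let f : ι → S := fun i => ⟨q i, hqS i⟩
  have hirr : IsIrreducible (range f) := by
    refine ⟨range_nonempty f, isPreirreducible_of_directedOn_specializes ?_⟩
    refine directedOn_range.2 fun i j => ?_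
    obtain ⟨k, hik, hjk⟩ := directed_of (· ≤ ·) i j
    exact ⟨k, subtype_specializes_iff_le.2 (hq hik), subtype_specializes_iff_le.2 (hq hjk)⟩
  have hξ := hirr.isGenericPoint_genericPoint_closure
  have hle (i : ι) : (hirr.genericPoint : α) ≤ q i :=
    subtype_specializes_iff_le.1 (hξ.specializes (subset_closure (mem_range_self i)))
  have hge : ⨅ i, q i ≤ hirr.genericPoint := by
    have hclosed : IsClosed (Subtype.val ⁻¹' Ici (⨅ i, q i) : Set S) :=
      isClosed_Ici.preimage continuous_subtype_val
    exact (hξ.mem_closed_set_iff hclosed).2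
      (hclosed.closure_subset_iff.2 (range_subset_iff.2 fun i => iInf_le q i))
  exact le_antisymm (le_iInf hle) hge ▸ hirr.genericPoint.2

end Topology.IsLower

theorem isLower_coarseLowerTopology (R : Type*) [CommRing R] :
    @Topology.IsLower (Ideal R) (coarseLowerTopology R) _ :=
  @Topology.IsLower.mk _ (coarseLowerTopology R) _ <| congrArg TopologicalSpace.generateFrom <| by
    ext; exact exists_congr fun _ => eq_comm

namespace Ideal

variable {R : Type*} [CommRing R]

theorem exists_one_sub_mul_mem_of_forall_mem_sup_pow [IsNoetherianRing R] {A m : Ideal R}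
    {z : R} (hz : ∀ n : ℕ, z ∈ A ⊔ m ^ n) : ∃ r ∈ m, (1 - r) * z ∈ A := by
  have hmem : Quotient.mk A z ∈ (⨅ n : ℕ, m ^ n • ⊤ : Submodule R (R ⧸ A)) :=
    Submodule.mem_iInf _ |>.2 fun n => by
      rw [smul_top_eq_map, Submodule.restrictScalars_mem]
      exact mem_quotient_iff_mem_sup.2 (sup_comm A _ ▸ hz n)
  obtain ⟨⟨r, hr⟩, hrz⟩ := (m.mem_iInf_smul_pow_eq_bot_iff _).1 hmem
  refine ⟨r, hr, Quotient.eq_zero_iff_mem.1 ?_⟩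
  rw [sub_mul, one_mul, map_sub, map_mul, sub_eq_zero]
  exact hrz.symm

theorem mem_of_forall_mem_sup_pow [IsNoetherianRing R] {A m P : Ideal R} [P.IsPrime]
    (hm : m ≠ ⊤) (hAP : A ≤ P) (hPm : P ≤ m) {z : R} (hz : ∀ n : ℕ, z ∈ A ⊔ m ^ n) :
    z ∈ P := by
  obtain ⟨r, hr, hrz⟩ := exists_one_sub_mul_mem_of_forall_mem_sup_pow hz
  refine (IsPrime.mem_or_mem ‹_› (hAP hrz)).resolve_left fun h => hm ?_
  exact (eq_top_iff_one m).2 (by simpa using add_mem (hPm h) hr)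

theorem not_forall_mem_sup_span_mul_sup_pow [IsNoetherianRing R] {P m : Ideal R} [P.IsPrime]
    (hm : m ≠ ⊤) (hPm : P ≤ m) {x : R} (hx : x ∉ P) :
    ¬ ∀ n : ℕ, x ∈ P ⊔ span {x} * m ⊔ m ^ n := by
  intro hx'
  obtain ⟨r, hr, hrx⟩ := exists_one_sub_mul_mem_of_forall_mem_sup_pow hx'
  obtain ⟨a, ha, b, hb, hab⟩ := Submodule.mem_sup.1 hrx
  obtain ⟨c, hc, rfl⟩ := mem_span_singleton_mul.1 hb
  have hxrc : x * (1 - r - c) ∈ P := by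
    convert ha using 1
    linear_combination -hab
  have hrc : 1 - r - c ∈ P := (IsPrime.mem_or_mem ‹_› hxrc).resolve_left hx
  refine hm ((eq_top_iff_one m).2 ?_)
  convert add_mem (add_mem (hPm hrc) hr) hc using 1
  ring

theorem isPrimary_sup_pow {A m : Ideal R} [m.IsMaximal] (hAm : A ≤ m) {n : ℕ} (hn : n ≠ 0) :
    (A ⊔ m ^ n).IsPrimary := by
  refine isPrimary_of_isMaximal_radical ?_
  have hrad : radical (A ⊔ m ^ n) = m := le_antisymm
    ((radical_mono (sup_le hAm (pow_le_self hn))).trans (IsPrime.radical inferInstance).le)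
    ((IsPrime.radical inferInstance).ge.trans
      ((m.radical_pow hn).ge.trans (radical_mono le_sup_right)))
  rw [hrad]
  infer_instance

theorem not_isPrimary_iInf_sup_span_mul_sup_pow [IsNoetherianRing R] {P Q m : Ideal R}
    [P.IsPrime] [Q.IsPrime] (hm : m ≠ ⊤) (hPQ : P ≤ Q) (hQm : Q ≤ m) {x y : R} (hxQ : x ∈ Q)
    (hxP : x ∉ P) (hym : y ∈ m) (hyQ : y ∉ Q) :
    ¬ (⨅ n : ℕ, P ⊔ span {x} * m ⊔ m ^ (n + 1)).IsPrimary := by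
  have hmem {z : R} (hz : z ∈ ⨅ n : ℕ, P ⊔ span {x} * m ⊔ m ^ (n + 1)) (n : ℕ) :
      z ∈ P ⊔ span {x} * m ⊔ m ^ n :=
    sup_le_sup_left (pow_le_pow_right n.le_succ) (P ⊔ span {x} * m) (mem_iInf.1 hz n)
  have hxy : x * y ∈ ⨅ n : ℕ, P ⊔ span {x} * m ⊔ m ^ (n + 1) :=
    mem_iInf.2 fun n => mem_sup_left (mem_sup_right (mul_mem_mul (mem_span_singleton_self x) hym))
  intro hprim
  rcases (isPrimary_iff.1 hprim).2 hxy with hx | ⟨k, hk⟩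
  · exact not_forall_mem_sup_span_mul_sup_pow hm (hPQ.trans hQm) hxP (hmem hx)
  · have hAQ : P ⊔ span {x} * m ≤ Q :=
      sup_le hPQ (mul_le_left.trans ((span_singleton_le_iff_mem _).2 hxQ))
    exact hyQ (IsPrime.mem_of_pow_mem ‹_› k (mem_of_forall_mem_sup_pow hm hAQ hQm (hmem hk)))

theorem exists_isPrime_lt_isPrime_lt_isMaximal (h : ¬ ringKrullDim R ≤ 1) :
    ∃ P Q m : Ideal R, P.IsPrime ∧ Q.IsPrime ∧ m.IsMaximal ∧ P < Q ∧ Q < m := by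
  rw [← Nat.cast_one, ← Ring.krullDimLE_iff, Ring.krullDimLE_one_iff] at h
  push Not at h
  obtain ⟨Q, hQ, hQmin, hQmax⟩ := h
  obtain ⟨P, hP, hPQ⟩ := exists_minimalPrimes_le (bot_le : ⊥ ≤ Q)
  obtain ⟨m, hm, hQm⟩ := Q.exists_le_maximal hQ.ne_top
  exact ⟨P, Q, m, hP.1.1, hQ, hm, hPQ.lt_of_ne (by rintro rfl; exact hQmin hP),
    hQm.lt_of_ne (by rintro rfl; exact hQmax hm)⟩

end Ideal

open Ideal in
/-- If `R` is Noetherian and the space of primary ideals is sober, then the Krull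
dimension of `R` is at most 1. -/
theorem dim_le_one_of_prm_sober {R : Type*} [CommRing R] [IsNoetherianRing R]
    (h : letI := coarseLowerTopology R; QuasiSober {a : Ideal R | a.IsPrimary}) :
    ringKrullDim R ≤ 1 := by
  let := coarseLowerTopology R
  have := isLower_coarseLowerTopology R
  have : QuasiSober {a : Ideal R | a.IsPrimary} := h
  by_contra hdim
  obtain ⟨P, Q, m, hP, hQ, hm, hPQ, hQm⟩ := exists_isPrime_lt_isPrime_lt_isMaximal hdim
  obtain ⟨x, hxQ, hxP⟩ := SetLike.exists_of_lt hPQ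
  obtain ⟨y, hym, hyQ⟩ := SetLike.exists_of_lt hQm
  have hAm : P ⊔ span {x} * m ≤ m := sup_le (hPQ.le.trans hQm.le) mul_le_right
  have hprim : ⨅ n : ℕ, P ⊔ span {x} * m ⊔ m ^ (n + 1) ∈ {a : Ideal R | a.IsPrimary} :=
    Topology.IsLower.iInf_mem_of_quasiSober
      (fun _ _ hij => sup_le_sup_left (pow_le_pow_right (by omega)) _)
      (fun n => isPrimary_sup_pow hAm n.succ_ne_zero)
  exact not_isPrimary_iInf_sup_span_mul_sup_pow hm.ne_top hPQ.le hQm.le hxQ hxP hym hyQ hprim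
end
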